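/- arXiv:2409.00350 — 2 statements merged into one kernel-verified Lean document; each statement's English description precedes it below -/
import Mathlib

section
/- Let an orientation of the cycle C_n have exactly one source and one sink which are at distance d ≠ n/2 along the cycle. Then its monitoring arc-geodetic number equals 3. -/
namespace MAG

variable {V : Type*}

/-- Directed walk from `x` to `y` whose list of visited vertices is `l`. -/
inductive DWalk (A : V → V → Prop) : V → V → List V → Prop
  | nil (v : V) : DWalk A v v [v]
  | cons {u v w : V} {l : List V} (h : A u v) (p : DWalk A v w l) :
      DWalk A u w (u :: l)

/-- The arc `(a, b)` lies on the walk with vertex list `l`. -/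
def ArcOn (a b : V) (l : List V) : Prop :=
  ∃ l₁ l₂ : List V, l = l₁ ++ a :: b :: l₂

/-- `l` is (the vertex list of) a shortest directed walk from `x` to `y`. -/
def IsShortest (A : V → V → Prop) (x y : V) (l : List V) : Prop :=
  DWalk A x y l ∧ ∀ l' : List V, DWalk A x y l' → l.length ≤ l'.length

/-- `x` and `y` monitor the arc `(a, b)`: the arc lies on every shortest
directed path from `x` to `y` (and such a path exists), or symmetrically
from `y` to `x`. -/
def Monitors (A : V → V → Prop) (x y a b : V) : Prop :=
  ((∃ l, IsShortest A x y l) ∧ ∀ l, IsShortest A x y l → ArcOn a b l) ∨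
  ((∃ l, IsShortest A y x l) ∧ ∀ l, IsShortest A y x l → ArcOn a b l)

/-- A monitoring arc-geodetic set of the digraph `A`. -/
def IsMAGSet (A : V → V → Prop) (M : Set V) : Prop :=
  ∀ a b : V, A a b → ∃ x ∈ M, ∃ y ∈ M, x ≠ y ∧ Monitors A x y a b

/-- The monitoring arc-geodetic number of the digraph `A`. -/
noncomputable def mag (A : V → V → Prop) [Fintype V] : ℕ :=
  sInf {n | ∃ M : Finset V, IsMAGSet A (M : Set V) ∧ M.card = n}

/-- `A` is an orientation of the undirected simple graph `G`. -/
structure IsOrientation (G : SimpleGraph V) (A : V → V → Prop) : Prop where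
  adj_iff : ∀ u v : V, G.Adj u v ↔ (A u v ∨ A v u)
  asymm : ∀ u v : V, A u v → ¬ A v u

/-- The lower monitoring arc-geodetic number of `G`. -/
noncomputable def magMinus (G : SimpleGraph V) [Fintype V] : ℕ :=
  sInf {n | ∃ A : V → V → Prop, IsOrientation G A ∧ mag A = n}

/-- The upper monitoring arc-geodetic number of `G`. -/
noncomputable def magPlus (G : SimpleGraph V) [Fintype V] : ℕ :=
  sSup {n | ∃ A : V → V → Prop, IsOrientation G A ∧ mag A = n}

/-- A source: a vertex with no in-neighbours. -/
def IsSource (A : V → V → Prop) (v : V) : Prop := ∀ w, ¬ A w v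

/-- A sink: a vertex with no out-neighbours. -/
def IsSink (A : V → V → Prop) (v : V) : Prop := ∀ w, ¬ A v w

/-- An oriented graph: no loops and no pair of opposite arcs. -/
def IsOrientedGraph (A : V → V → Prop) : Prop :=
  (∀ v, ¬ A v v) ∧ ∀ u v : V, A u v → ¬ A v u

/-- The underlying undirected graph of `A` is connected. -/
def IsConnectedDigraph (A : V → V → Prop) : Prop :=
  ∀ x y : V, Relation.ReflTransGen (fun a b => A a b ∨ A b a) x y


/-! A pair monitoring an arc out of a source must start at the source, and then all its geodesics
begin with that arc. The two arcs leaving the source of the cycle therefore need two different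
partners of the source, so a monitoring set has at least three vertices.

Conversely, every vertex other than the source has a single out-neighbour, so a pair monitors each
arc whose tail lies on all its geodesics. As `d ≠ n/2`, the shorter source–sink path is the unique
source–sink geodesic, and `(v_1, v_{d+1})` covers it. If it runs through `v_2`, add `v_{d+2}`: the
longer path is the only route from `v_1` to `v_{d+2}`, and `(v_{d+2}, v_{d+1})` covers its last arc.
If it runs through `v_n`, add `v_2`: the pairs `(v_1, v_2)` and `(v_2, v_{d+1})` cover the longer
path. -/

section Digraph

variable {A : V → V → Prop} {x y : V} {l : List V}

theorem ArcOn.cons {a b : V} (h : ArcOn a b l) (c : V) : ArcOn a b (c :: l) := by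
  obtain ⟨l₁, l₂, rfl⟩ := h
  exact ⟨c :: l₁, l₂, rfl⟩

theorem exists_isShortest (h : ∃ l, DWalk A x y l) : ∃ l, IsShortest A x y l := by
  obtain ⟨l, hl, hmin⟩ := (measure List.length).wf.has_min {l | DWalk A x y l} h
  exact ⟨l, hl, fun l' hl' => not_lt.mp (hmin l' hl')⟩

namespace DWalk

theorem eq_cons (h : DWalk A x y l) : ∃ t, l = x :: t := by
  cases h <;> exact ⟨_, rfl⟩

theorem exists_cons_cons (h : DWalk A x y l) (hxy : x ≠ y) :
    ∃ c t, A x c ∧ DWalk A c y (c :: t) ∧ l = x :: c :: t := by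
  cases h with
  | nil => exact absurd rfl hxy
  | cons hxc p =>
    obtain ⟨t, rfl⟩ := p.eq_cons
    exact ⟨_, t, hxc, p, rfl⟩

theorem exists_arcOn_of_mem (h : DWalk A x y l) {a : V} (ha : a ∈ l) (hay : a ≠ y) :
    ∃ b, A a b ∧ ArcOn a b l := by
  induction h with
  | nil v => exact absurd (List.mem_singleton.mp ha) hay
  | cons huv p ih =>
    rcases List.mem_cons.mp ha with rfl | ha
    · obtain ⟨t, rfl⟩ := p.eq_cons
      exact ⟨_, huv, [], t, rfl⟩
    · obtain ⟨b, hab, hl⟩ := ih ha hay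
      exact ⟨b, hab, hl.cons _⟩

theorem eq_cons_cons_of_arcOn_of_isSource (h : DWalk A x y l) {s b : V} (hs : IsSource A s)
    (hsb : ArcOn s b l) : x = s ∧ ∃ t, l = s :: b :: t := by
  induction h with
  | nil v =>
    obtain ⟨l₁, l₂, he⟩ := hsb
    have := congrArg List.length he
    simp at this
    omega
  | cons huv p ih =>
    obtain ⟨_ | ⟨c, l₁⟩, l₂, he⟩ := hsb
    · obtain ⟨rfl, rfl⟩ := List.cons.inj he
      exact ⟨rfl, l₂, rfl⟩
    · obtain ⟨rfl, -⟩ := ih ⟨l₁, l₂, (List.cons.inj he).2⟩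
      exact absurd huv (hs _)

end DWalk

theorem forall_isShortest_eq_cons_cons_of_isSource {p q s b : V} (hs : IsSource A s)
    (hex : ∃ l, IsShortest A p q l) (hall : ∀ l, IsShortest A p q l → ArcOn s b l) :
    p = s ∧ ∀ l, IsShortest A p q l → ∃ t, l = s :: b :: t := by
  obtain ⟨l, hl⟩ := hex
  exact ⟨(hl.1.eq_cons_cons_of_arcOn_of_isSource hs (hall l hl)).1,
    fun l' hl' => (hl'.1.eq_cons_cons_of_arcOn_of_isSource hs (hall l' hl')).2⟩

theorem IsMAGSet.exists_partner_of_isSource {M : Set V} (hM : IsMAGSet A M) {s b : V}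
    (hs : IsSource A s) (hsb : A s b) :
    s ∈ M ∧ ∃ q ∈ M, q ≠ s ∧ (∃ l, IsShortest A s q l) ∧
      ∀ l, IsShortest A s q l → ∃ t, l = s :: b :: t := by
  obtain ⟨x, hx, y, hy, hxy, ⟨hex, hall⟩ | ⟨hex, hall⟩⟩ := hM s b hsb
  · obtain ⟨rfl, h⟩ := forall_isShortest_eq_cons_cons_of_isSource hs hex hall
    exact ⟨hx, y, hy, hxy.symm, hex, h⟩
  · obtain ⟨rfl, h⟩ := forall_isShortest_eq_cons_cons_of_isSource hs hex hall
    exact ⟨hy, x, hx, hxy, hex, h⟩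

theorem IsMAGSet.three_le_card_of_isSource {M : Finset V} (hM : IsMAGSet A M) {s b b' : V}
    (hs : IsSource A s) (hb : A s b) (hb' : A s b') (hbb' : b ≠ b') : 3 ≤ M.card := by
  classical
  obtain ⟨hsM, q, hqM, hqs, ⟨l, hl⟩, hq⟩ := hM.exists_partner_of_isSource hs hb
  obtain ⟨-, q', hq'M, hq's, -, hq'⟩ := hM.exists_partner_of_isSource hs hb'
  have hqq' : q ≠ q' := by
    rintro rfl
    obtain ⟨t, ht⟩ := hq l hl
    obtain ⟨t', ht'⟩ := hq' l hl
    exact hbb' (List.cons.inj (List.cons.inj (ht.symm.trans ht')).2).1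
  calc 3 = ({s, q, q'} : Finset V).card :=
        (Finset.card_eq_three.mpr ⟨s, q, q', hqs.symm, hq's.symm, hqq', rfl⟩).symm
    _ ≤ M.card := Finset.card_le_card <|
        Finset.insert_subset hsM <| Finset.insert_subset hqM <| Finset.singleton_subset_iff.mpr hq'M

theorem mag_eq_of_isMAGSet [Fintype V] {M : Finset V} {k : ℕ} (hM : IsMAGSet A M)
    (hcard : M.card = k) (hle : ∀ M' : Finset V, IsMAGSet A M' → k ≤ M'.card) : mag A = k :=
  le_antisymm (Nat.sInf_le ⟨M, hM, hcard⟩) <| le_csInf ⟨k, M, hM, hcard⟩ <| by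
    rintro m ⟨M', hM', rfl⟩
    exact hle M' hM'

end Digraph

/-- The paper's vertex `v_{i+1}` is `i : Fin n`: the source is `0` and the sink is `d`. -/
abbrev orientedCycle (n d : ℕ) : Fin n → Fin n → Prop := fun i j =>
  (i.val < d ∧ j.val = i.val + 1) ∨ (i.val = 0 ∧ j.val = n - 1) ∨
    (d + 1 ≤ i.val ∧ j.val = i.val - 1)

section OrientedCycle

variable {n d : ℕ} {a b s x y : Fin n} {l : List (Fin n)}

theorem isSource_orientedCycle (hn : 2 ≤ n) (hd : 1 ≤ d) (hs : s.val = 0) :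
    IsSource (orientedCycle n d) s := by
  intro w h
  rcases h with ⟨_, _⟩ | ⟨_, _⟩ | ⟨_, _⟩ <;> omega

theorem orientedCycle_right_unique (ha : a.val ≠ 0) (hb : orientedCycle n d a b) {c : Fin n}
    (hc : orientedCycle n d a c) : c = b := by
  ext
  rcases hb with ⟨_, _⟩ | ⟨_, _⟩ | ⟨_, _⟩ <;> rcases hc with ⟨_, _⟩ | ⟨_, _⟩ | ⟨_, _⟩ <;> omega

theorem arcOn_orientedCycle (h : DWalk (orientedCycle n d) x y l) (ha : a ∈ l) (hay : a ≠ y)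
    (ha0 : a.val ≠ 0) (hab : orientedCycle n d a b) : ArcOn a b l := by
  obtain ⟨c, hac, hl⟩ := h.exists_arcOn_of_mem ha hay
  rwa [orientedCycle_right_unique ha0 hab hac] at hl

theorem dwalk_orientedCycle_ascending (h : DWalk (orientedCycle n d) x y l) (hx : 1 ≤ x.val)
    (hxd : x.val ≤ d) :
    x.val ≤ y.val ∧ y.val ≤ d ∧ l.length = y.val - x.val + 1 ∧
      ∀ i : Fin n, x.val ≤ i.val → i.val ≤ y.val → i ∈ l := by
  induction h with
  | nil v =>
    refine ⟨le_rfl, hxd, by simp, fun i hi hi' => ?_⟩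
    rw [show i = v by ext; omega]
    exact List.mem_singleton_self v
  | @cons u v w l huv p ih =>
    have hv : v.val = u.val + 1 ∧ u.val < d := by
      rcases huv with ⟨_, _⟩ | ⟨_, _⟩ | ⟨_, _⟩ <;> omega
    obtain ⟨hvw, hwd, hlen, hmem⟩ := ih (by omega) (by omega)
    refine ⟨by omega, hwd, by simp only [List.length_cons]; omega, fun i hi hi' => ?_⟩
    rcases eq_or_ne i u with rfl | hiu
    · exact List.mem_cons_self
    · exact List.mem_cons_of_mem _ (hmem i (by have := Fin.val_ne_of_ne hiu; omega) hi')

theorem dwalk_orientedCycle_descending (hd : 1 ≤ d) (h : DWalk (orientedCycle n d) x y l)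
    (hx : d ≤ x.val) :
    d ≤ y.val ∧ y.val ≤ x.val ∧ l.length = x.val - y.val + 1 ∧
      ∀ i : Fin n, y.val ≤ i.val → i.val ≤ x.val → i ∈ l := by
  induction h with
  | nil v =>
    refine ⟨hx, le_rfl, by simp, fun i hi hi' => ?_⟩
    rw [show i = v by ext; omega]
    exact List.mem_singleton_self v
  | @cons u v w l huv p ih =>
    have hv : v.val = u.val - 1 ∧ d + 1 ≤ u.val := by
      rcases huv with ⟨_, _⟩ | ⟨_, _⟩ | ⟨_, _⟩ <;> omega
    obtain ⟨hdw, hwv, hlen, hmem⟩ := ih (by omega)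
    refine ⟨hdw, by omega, by simp only [List.length_cons]; omega, fun i hi hi' => ?_⟩
    rcases eq_or_ne i u with rfl | hiu
    · exact List.mem_cons_self
    · exact List.mem_cons_of_mem _ (hmem i hi (by have := Fin.val_ne_of_ne hiu; omega))

theorem exists_dwalk_orientedCycle_ascending (hxy : x.val ≤ y.val) (hy : y.val ≤ d) : ∃ l, DWalk (orientedCycle n d) x y l := by
  obtain ⟨k, hk⟩ := Nat.exists_eq_add_of_le hxy
  induction k generalizing x with
  | zero =>
    obtain rfl : x = y := by ext; omega
    exact ⟨_, .nil x⟩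
  | succ k ih =>
    obtain ⟨l, hl⟩ := ih (x := ⟨x.val + 1, by omega⟩) (by simp; omega) (by simp; omega)
    exact ⟨x :: l, .cons (Or.inl ⟨by omega, rfl⟩) hl⟩

theorem exists_dwalk_orientedCycle_descending (hy : d ≤ y.val) (hxy : y.val ≤ x.val) :
    ∃ l, DWalk (orientedCycle n d) x y l := by
  obtain ⟨k, hk⟩ := Nat.exists_eq_add_of_le hxy
  induction k generalizing x with
  | zero =>
    obtain rfl : x = y := by ext; omega
    exact ⟨_, .nil x⟩
  | succ k ih =>
    obtain ⟨l, hl⟩ := ih (x := ⟨x.val - 1, by omega⟩) (by simp; omega) (by simp; omega)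
    exact ⟨x :: l, .cons (Or.inr (Or.inr ⟨by omega, rfl⟩)) hl⟩

theorem dwalk_orientedCycle_from_source (hd : 1 ≤ d) (hdn : d < n)
    (h : DWalk (orientedCycle n d) s y l) (hs : s.val = 0) (hys : y ≠ s) :
    ∃ c t, l = s :: c :: t ∧ DWalk (orientedCycle n d) c y (c :: t) ∧
      (c.val = 1 ∧ y.val ≤ d ∧ l.length = y.val + 1 ∨
        c.val = n - 1 ∧ d ≤ y.val ∧ l.length = n - y.val + 1) := by
  obtain ⟨c, t, hsc, p, rfl⟩ := h.exists_cons_cons hys.symm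
  refine ⟨c, t, rfl, p, ?_⟩
  simp only [List.length_cons]
  rcases hsc with ⟨_, hc⟩ | ⟨_, hc⟩ | ⟨_, _⟩
  · obtain ⟨-, hyd, hlen, -⟩ := dwalk_orientedCycle_ascending p (by omega) (by omega)
    simp only [List.length_cons] at hlen
    omega
  · obtain ⟨hdy, -, hlen, -⟩ := dwalk_orientedCycle_descending hd p (by omega)
    simp only [List.length_cons] at hlen
    omega
  · omega

theorem exists_dwalk_orientedCycle_source_of_le_sink (hs : s.val = 0) (hy : 1 ≤ y.val)
    (hyd : y.val ≤ d) : ∃ l, DWalk (orientedCycle n d) s y l ∧ l.length = y.val + 1 := by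
  obtain ⟨l, hl⟩ := exists_dwalk_orientedCycle_ascending (x := ⟨1, by omega⟩) hy hyd
  obtain ⟨-, -, hlen, -⟩ := dwalk_orientedCycle_ascending hl le_rfl (by simp; omega)
  dsimp only at hlen
  exact ⟨s :: l, .cons (Or.inl ⟨by omega, by simp [hs]⟩) hl, by simp only [List.length_cons]; omega⟩

theorem exists_dwalk_orientedCycle_source_of_sink_le (hd : 1 ≤ d) (hs : s.val = 0)
    (hdy : d ≤ y.val) : ∃ l, DWalk (orientedCycle n d) s y l ∧ l.length = n - y.val + 1 := by
  obtain ⟨l, hl⟩ :=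
    exists_dwalk_orientedCycle_descending (x := ⟨n - 1, by omega⟩) hdy (by simp; omega)
  obtain ⟨-, -, hlen, -⟩ := dwalk_orientedCycle_descending hd hl (by simp; omega)
  exact ⟨s :: l, .cons (Or.inr (Or.inl ⟨hs, rfl⟩)) hl, by simp only [List.length_cons] at *; omega⟩

theorem arcOn_orientedCycle_via_one (hs : s.val = 0) {c : Fin n} {t : List (Fin n)}
    (p : DWalk (orientedCycle n d) c y (c :: t)) (hc : c.val = 1)
    (hab : a.val < d ∧ b.val = a.val + 1) (hay : a.val < y.val) : ArcOn a b (s :: c :: t) := by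
  by_cases ha0 : a.val = 0
  · obtain rfl : a = s := by ext; omega
    obtain rfl : b = c := by ext; omega
    exact ⟨[], t, rfl⟩
  · have hmem := (dwalk_orientedCycle_ascending p (by omega) (by omega)).2.2.2 a (by omega) hay.le
    exact (arcOn_orientedCycle p hmem (by rintro rfl; omega) ha0 (Or.inl hab)).cons s

theorem arcOn_orientedCycle_via_last (hd : 1 ≤ d) (hdn : d < n) (hs : s.val = 0)
    {c : Fin n} {t : List (Fin n)} (p : DWalk (orientedCycle n d) c y (c :: t)) (hc : c.val = n - 1)
    (hab : a.val = 0 ∧ b.val = n - 1 ∨ d + 1 ≤ a.val ∧ b.val = a.val - 1)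
    (hay : a.val = 0 ∨ y.val < a.val) : ArcOn a b (s :: c :: t) := by
  rcases hab with ⟨ha0, hb⟩ | ⟨ha, hb⟩
  · obtain rfl : a = s := by ext; omega
    obtain rfl : b = c := by ext; omega
    exact ⟨[], t, rfl⟩
  · have hmem := (dwalk_orientedCycle_descending hd p (by omega)).2.2.2 a (by omega) (by omega)
    exact (arcOn_orientedCycle p hmem (by rintro rfl; omega) (by omega)
      (Or.inr (Or.inr ⟨ha, hb⟩))).cons s

theorem monitors_orientedCycle (hw : ∃ l, DWalk (orientedCycle n d) x y l)
    (hmem : ∀ l, DWalk (orientedCycle n d) x y l → a ∈ l) (hay : a ≠ y) (ha0 : a.val ≠ 0)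
    (hab : orientedCycle n d a b) : Monitors (orientedCycle n d) x y a b :=
  Or.inl ⟨exists_isShortest hw, fun l hl => arcOn_orientedCycle hl.1 (hmem l hl.1) hay ha0 hab⟩

theorem monitors_orientedCycle_source_sink_of_two_mul_lt (hd : 1 ≤ d) (h : 2 * d < n)
    (hs : s.val = 0) (hy : y.val = d) (hab : a.val < d ∧ b.val = a.val + 1) :
    Monitors (orientedCycle n d) s y a b := by
  obtain ⟨w, hw, hwlen⟩ := exists_dwalk_orientedCycle_source_of_le_sink hs (by omega) hy.le
  refine Or.inl ⟨exists_isShortest ⟨w, hw⟩, fun l hl => ?_⟩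
  obtain ⟨c, t, rfl, p, ⟨hc, -⟩ | ⟨-, -, hlen⟩⟩ :=
    dwalk_orientedCycle_from_source hd (by omega) hl.1 hs (by rintro rfl; omega)
  · exact arcOn_orientedCycle_via_one hs p hc hab (by omega)
  · have := hl.2 w hw
    omega

theorem monitors_orientedCycle_source_succ_sink (hd : 1 ≤ d) (hs : s.val = 0)
    (hy : y.val = d + 1) (hab : a.val = 0 ∧ b.val = n - 1 ∨ d + 1 ≤ a.val ∧ b.val = a.val - 1)
    (hay : a.val = 0 ∨ d + 1 < a.val) : Monitors (orientedCycle n d) s y a b := by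
  obtain ⟨w, hw, -⟩ := exists_dwalk_orientedCycle_source_of_sink_le hd hs (y := y) (by omega)
  refine Or.inl ⟨exists_isShortest ⟨w, hw⟩, fun l hl => ?_⟩
  obtain ⟨c, t, rfl, p, ⟨-, hyd, -⟩ | ⟨hc, -⟩⟩ :=
    dwalk_orientedCycle_from_source hd (by omega) hl.1 hs (by rintro rfl; omega)
  · omega
  · exact arcOn_orientedCycle_via_last hd (by omega) hs p hc hab (by omega)

theorem monitors_orientedCycle_source_one (hd : 2 ≤ d) (hdn : d < n) (hs : s.val = 0)
    (hy : y.val = 1) : Monitors (orientedCycle n d) s y s y := by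
  obtain ⟨w, hw, -⟩ :=
    exists_dwalk_orientedCycle_source_of_le_sink (d := d) hs (y := y) (by omega) (by omega)
  refine Or.inl ⟨exists_isShortest ⟨w, hw⟩, fun l hl => ?_⟩
  obtain ⟨c, t, rfl, p, ⟨hc, -⟩ | ⟨-, hdy, -⟩⟩ :=
    dwalk_orientedCycle_from_source (by omega) hdn hl.1 hs (by rintro rfl; omega)
  · exact arcOn_orientedCycle_via_one hs p hc (by omega) (by omega)
  · omega

theorem monitors_orientedCycle_source_sink_of_lt_two_mul (hd : 1 ≤ d) (hdn : d < n)
    (h : n < 2 * d) (hs : s.val = 0) (hy : y.val = d)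
    (hab : a.val = 0 ∧ b.val = n - 1 ∨ d + 1 ≤ a.val ∧ b.val = a.val - 1) :
    Monitors (orientedCycle n d) s y a b := by
  obtain ⟨w, hw, hwlen⟩ := exists_dwalk_orientedCycle_source_of_sink_le hd hs hy.ge
  refine Or.inl ⟨exists_isShortest ⟨w, hw⟩, fun l hl => ?_⟩
  obtain ⟨c, t, rfl, p, ⟨-, -, hlen⟩ | ⟨hc, -⟩⟩ :=
    dwalk_orientedCycle_from_source hd hdn hl.1 hs (by rintro rfl; omega)
  · have := hl.2 w hw
    omega
  · exact arcOn_orientedCycle_via_last hd hdn hs p hc hab (by omega)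

theorem exists_isMAGSet_orientedCycle_of_two_mul_lt (hd : 1 ≤ d) (h : 2 * d < n) :
    ∃ M : Finset (Fin n), IsMAGSet (orientedCycle n d) M ∧ M.card = 3 := by
  obtain ⟨s, hs⟩ : ∃ v : Fin n, v.val = 0 := ⟨⟨0, by omega⟩, rfl⟩
  obtain ⟨t, ht⟩ : ∃ v : Fin n, v.val = d := ⟨⟨d, by omega⟩, rfl⟩
  obtain ⟨u, hu⟩ : ∃ v : Fin n, v.val = d + 1 := ⟨⟨d + 1, by omega⟩, rfl⟩
  refine ⟨{s, t, u}, fun a b hab => ?_, Finset.card_eq_three.mpr ⟨s, t, u,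
    Fin.ne_of_val_ne (by omega), Fin.ne_of_val_ne (by omega), Fin.ne_of_val_ne (by omega), rfl⟩⟩
  rcases hab with hup | hdown
  · exact ⟨s, by simp, t, by simp, Fin.ne_of_val_ne (by omega),
      monitors_orientedCycle_source_sink_of_two_mul_lt hd h hs ht hup⟩
  by_cases ha : a.val = d + 1
  · obtain rfl : a = u := by ext; omega
    refine ⟨a, by simp, t, by simp, Fin.ne_of_val_ne (by omega), monitors_orientedCycle
      (exists_dwalk_orientedCycle_descending (by omega) (by omega)) (fun l hl => ?_)
      (Fin.ne_of_val_ne (by omega)) (by omega) (Or.inr hdown)⟩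
    obtain ⟨l, rfl⟩ := hl.eq_cons
    exact List.mem_cons_self
  · exact ⟨s, by simp, u, by simp, Fin.ne_of_val_ne (by omega),
      monitors_orientedCycle_source_succ_sink hd hs hu hdown (by omega)⟩

theorem exists_isMAGSet_orientedCycle_of_lt_two_mul (hdn : d < n) (h : n < 2 * d) :
    ∃ M : Finset (Fin n), IsMAGSet (orientedCycle n d) M ∧ M.card = 3 := by
  obtain ⟨s, hs⟩ : ∃ v : Fin n, v.val = 0 := ⟨⟨0, by omega⟩, rfl⟩
  obtain ⟨o, ho⟩ : ∃ v : Fin n, v.val = 1 := ⟨⟨1, by omega⟩, rfl⟩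
  obtain ⟨t, ht⟩ : ∃ v : Fin n, v.val = d := ⟨⟨d, hdn⟩, rfl⟩
  refine ⟨{s, o, t}, fun a b hab => ?_, Finset.card_eq_three.mpr ⟨s, o, t,
    Fin.ne_of_val_ne (by omega), Fin.ne_of_val_ne (by omega), Fin.ne_of_val_ne (by omega), rfl⟩⟩
  rcases hab with hup | hdown
  · by_cases ha0 : a.val = 0
    · obtain rfl : a = s := by ext; omega
      obtain rfl : b = o := by ext; omega
      exact ⟨a, by simp, b, by simp, Fin.ne_of_val_ne (by omega),
        monitors_orientedCycle_source_one (by omega) hdn hs ho⟩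
    · exact ⟨o, by simp, t, by simp, Fin.ne_of_val_ne (by omega), monitors_orientedCycle
        (exists_dwalk_orientedCycle_ascending (by omega) (by omega))
        (fun l hl => (dwalk_orientedCycle_ascending hl (by omega) (by omega)).2.2.2 a
          (by omega) (by omega))
        (Fin.ne_of_val_ne (by omega)) ha0 (Or.inl hup)⟩
  · exact ⟨s, by simp, t, by simp, Fin.ne_of_val_ne (by omega),
      monitors_orientedCycle_source_sink_of_lt_two_mul (by omega) hdn h hs ht hdown⟩

end OrientedCycle

/-- the orientation of `C_n` with exactly one source `v_1` and one
sink `v_{d+1}` at distance `d ≠ n/2` has monitoring arc-geodetic number `3`.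
(`0`-based: source is vertex `0`, sink is vertex `d`.) -/
theorem cycle_one_source_one_sink_mag_eq_three (n d : ℕ) (hn : 3 ≤ n)
    (hd1 : 1 ≤ d) (hd2 : d ≤ n - 1) (hd : 2 * d ≠ n) :
    mag (fun i j : Fin n =>
      (i.val < d ∧ j.val = i.val + 1) ∨
      (i.val = 0 ∧ j.val = n - 1) ∨
      (d + 1 ≤ i.val ∧ j.val = i.val - 1)) = 3 := by
  show mag (orientedCycle n d) = 3
  obtain ⟨M, hM, hcard⟩ : ∃ M : Finset (Fin n), IsMAGSet (orientedCycle n d) M ∧ M.card = 3 := by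
    rcases hd.lt_or_gt with h | h
    exacts [exists_isMAGSet_orientedCycle_of_two_mul_lt hd1 h,
      exists_isMAGSet_orientedCycle_of_lt_two_mul (by omega) h]
  refine mag_eq_of_isMAGSet hM hcard fun M' hM' => ?_
  obtain ⟨s, hs⟩ : ∃ v : Fin n, v.val = 0 := ⟨⟨0, by omega⟩, rfl⟩
  exact hM'.three_le_card_of_isSource (isSource_orientedCycle (by omega) hd1 hs)
    (b := ⟨1, by omega⟩) (b' := ⟨n - 1, by omega⟩) (Or.inl ⟨by omega, by simp [hs]⟩)
    (Or.inr (Or.inl ⟨hs, rfl⟩)) (Fin.ne_of_val_ne (by simp; omega))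

end MAG
end

section
/- Let G be a graph of girth g ≥ 3. If g is odd then mag^+(G) ≥ g−1, and if g is even then mag^+(G) ≥ g. -/
namespace MAG

variable {V : Type*}

/-!
Take a shortest cycle `u₀ u₁ … u_{g-1}`; by minimality it has no chords. Put `c = g mod 2` and
look at the `g - c` cycle vertices `u_{k+c}`, `k < g - c`: those with `k` even form an independent
set, and so do those with `k` odd, so some orientation makes the former sources and the latter
sinks. An arc from a source `s` to a sink `t` lies on a shortest path from `x` to `y` only if
`x = s` and `y = t`, so every monitoring arc-geodetic set contains both ends of the arcs
`u_{k+c} → u_{k+1+c}`, `k` even, and these ends are all `g - c` vertices.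
-/

open SimpleGraph Finset Function

section Digraph

variable {A : V → V → Prop} {x y : V} {l : List V}

lemma DWalk.length_pos (h : DWalk A x y l) : 0 < l.length := by
  cases h <;> simp

lemma DWalk.two_le_length (h : DWalk A x y l) (hxy : x ≠ y) : 2 ≤ l.length := by
  cases h with
  | nil => exact absurd rfl hxy
  | cons _ p =>
    have := p.length_pos
    simp only [List.length_cons]
    omega

lemma DWalk.eq_pair_of_length_le_two (h : DWalk A x y l) (hxy : x ≠ y) (hl : l.length ≤ 2) :
    l = [x, y] := by
  cases h with
  | nil => exact absurd rfl hxy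
  | cons _ p =>
    cases p with
    | nil => rfl
    | cons _ p =>
      have := p.length_pos
      simp only [List.length_cons] at hl
      omega

lemma DWalk.eq_of_isSource_of_mem {s : V} (h : DWalk A x y l) (hs : IsSource A s) (hmem : s ∈ l) :
    s = x := by
  induction h with
  | nil v => simpa using hmem
  | cons hA _ ih =>
    rcases List.mem_cons.mp hmem with rfl | hmem
    · rfl
    · exact absurd (by rwa [ih hmem]) (hs _)

lemma DWalk.eq_of_isSink_of_mem {t : V} (h : DWalk A x y l) (ht : IsSink A t) (hmem : t ∈ l) :
    t = y := by
  induction h with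
  | nil v => simpa using hmem
  | cons hA _ ih =>
    rcases List.mem_cons.mp hmem with rfl | hmem
    · exact absurd hA (ht _)
    · exact ih hmem

lemma isMAGSet_univ (hA : ∀ a, ¬ A a a) : IsMAGSet A Set.univ := by
  intro a b hab
  have hne : a ≠ b := by
    rintro rfl
    exact hA a hab
  have hwalk : DWalk A a b [a, b] := .cons hab (.nil b)
  refine ⟨a, trivial, b, trivial, hne,
    Or.inl ⟨⟨[a, b], hwalk, fun l hl => hl.two_le_length hne⟩, ?_⟩⟩
  rintro l ⟨hl, hmin⟩
  rw [hl.eq_pair_of_length_le_two hne (hmin _ hwalk)]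
  exact ⟨[], [], rfl⟩

lemma IsMAGSet.mem_of_isSource_of_isSink {M : Set V} (hM : IsMAGSet A M) {s t : V}
    (hs : IsSource A s) (ht : IsSink A t) (hst : A s t) : s ∈ M ∧ t ∈ M := by
  have ends : ∀ x y, ((∃ l, IsShortest A x y l) ∧ ∀ l, IsShortest A x y l → ArcOn s t l) →
      x = s ∧ y = t := by
    rintro x y ⟨⟨l, hl⟩, hall⟩
    obtain ⟨l₁, l₂, rfl⟩ := hall l hl
    exact ⟨(hl.1.eq_of_isSource_of_mem hs (by simp)).symm,
      (hl.1.eq_of_isSink_of_mem ht (by simp)).symm⟩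
  obtain ⟨x, hx, y, hy, -, hxy | hyx⟩ := hM s t hst
  · obtain ⟨rfl, rfl⟩ := ends x y hxy
    exact ⟨hx, hy⟩
  · obtain ⟨rfl, rfl⟩ := ends y x hyx
    exact ⟨hy, hx⟩

variable [Fintype V]

lemma mag_le_card (hA : ∀ a, ¬ A a a) : mag A ≤ Fintype.card V :=
  Nat.sInf_le ⟨univ, by simpa using isMAGSet_univ hA, card_univ⟩

lemma card_le_mag (hA : ∀ a, ¬ A a a) {X : Finset V}
    (hX : ∀ M : Finset V, IsMAGSet A M → X ⊆ M) : #X ≤ mag A :=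
  le_csInf ⟨_, univ, by simpa using isMAGSet_univ hA, rfl⟩ <| by
    rintro _ ⟨M, hM, rfl⟩
    exact card_le_card (hX M hM)

end Digraph

section Orientation

variable {G : SimpleGraph V} {A : V → V → Prop}

lemma IsOrientation.irrefl (hA : IsOrientation G A) (a : V) : ¬ A a a :=
  fun h => hA.asymm a a h h

lemma IsOrientation.apply_of_isSource (hA : IsOrientation G A) {s t : V} (hs : IsSource A s)
    (hst : G.Adj s t) : A s t :=
  ((hA.adj_iff s t).mp hst).resolve_right (hs t)

lemma IsOrientation.mag_le_magPlus [Fintype V] (hA : IsOrientation G A) : mag A ≤ magPlus G :=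
  le_csSup ⟨Fintype.card V, by rintro _ ⟨B, hB, rfl⟩; exact mag_le_card hB.irrefl⟩ ⟨A, hA, rfl⟩

def orientBy {α : Type*} [LinearOrder α] (G : SimpleGraph V) (f : V → α) (x y : V) : Prop :=
  G.Adj x y ∧ f x < f y

variable {α : Type*} [LinearOrder α] {f : V → α}

lemma isOrientation_orientBy (hf : Injective f) : IsOrientation G (orientBy G f) where
  adj_iff x y := by
    refine ⟨fun h => (lt_or_gt_of_ne (hf.ne h.ne)).imp (⟨h, ·⟩) (⟨h.symm, ·⟩), ?_⟩
    rintro (⟨h, -⟩ | ⟨h, -⟩)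
    exacts [h, h.symm]
  asymm _ _ h h' := lt_asymm h.2 h'.2

lemma isSource_orientBy {s : V} (h : ∀ z, G.Adj s z → f s < f z) : IsSource (orientBy G f) s :=
  fun z hz => lt_asymm hz.2 (h z hz.1.symm)

lemma isSink_orientBy {t : V} (h : ∀ z, G.Adj t z → f z < f t) : IsSink (orientBy G f) t :=
  fun z hz => lt_asymm hz.2 (h z hz.1)

lemma exists_isOrientation_isSource_isSink {S T : Set V} (hS : G.IsIndepSet S)
    (hT : G.IsIndepSet T) (hST : Disjoint S T) :
    ∃ A, IsOrientation G A ∧ (∀ s ∈ S, IsSource A s) ∧ ∀ t ∈ T, IsSink A t := by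
  classical
  let rank (x : V) : ℕ := if x ∈ S then 0 else if x ∈ T then 2 else 1
  let key (x : V) : ℕ ×ₗ Cardinal := toLex (rank x, embeddingToCardinal x)
  have hkey : Injective key := fun x y h =>
    embeddingToCardinal.injective (congrArg Prod.snd (toLex.injective h))
  have hrank : ∀ x z, rank x < rank z → key x < key z :=
    fun x z h => Prod.Lex.toLex_lt_toLex.mpr (Or.inl h)
  refine ⟨orientBy G key, isOrientation_orientBy hkey, fun s hs => isSource_orientBy ?_,
    fun t ht => isSink_orientBy ?_⟩
  · intro z hz
    have hzS : z ∉ S := fun hzS => hS hs hzS hz.ne hz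
    exact hrank s z (by simp only [rank, if_pos hs, if_neg hzS]; split_ifs <;> omega)
  · intro z hz
    have hzT : z ∉ T := fun hzT => hT ht hzT hz.ne hz
    have htS : t ∉ S := fun htS => hST.notMem_of_mem_left htS ht
    exact hrank z t (by simp only [rank, if_pos ht, if_neg hzT, if_neg htS]; split_ifs <;> omega)

theorem card_add_card_le_magPlus [Fintype V] {S T : Finset V} (hS : G.IsIndepSet S)
    (hT : G.IsIndepSet T) (hST : Disjoint S T) (hSadj : ∀ s ∈ S, ∃ t ∈ T, G.Adj s t)
    (hTadj : ∀ t ∈ T, ∃ s ∈ S, G.Adj s t) : #S + #T ≤ magPlus G := by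
  classical
  obtain ⟨A, hA, hsrc, hsnk⟩ :=
    exists_isOrientation_isSource_isSink hS hT (disjoint_coe.mpr hST)
  have hsub : ∀ M : Finset V, IsMAGSet A M → S ∪ T ⊆ M := by
    intro M hM x hx
    rcases mem_union.mp hx with hx | hx
    · obtain ⟨t, ht, hxt⟩ := hSadj x hx
      exact (hM.mem_of_isSource_of_isSink (hsrc x hx) (hsnk t ht)
        (hA.apply_of_isSource (hsrc x hx) hxt)).1
    · obtain ⟨s, hs, hsx⟩ := hTadj x hx
      exact (hM.mem_of_isSource_of_isSink (hsrc s hs) (hsnk x hx)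
        (hA.apply_of_isSource (hsrc s hs) hsx)).2
  calc #S + #T = #(S ∪ T) := (card_union_of_disjoint hST).symm
    _ ≤ mag A := card_le_mag hA.irrefl hsub
    _ ≤ magPlus G := hA.mag_le_magPlus

end Orientation

section Cycle

variable {G : SimpleGraph V}

theorem _root_.SimpleGraph.Walk.IsCycle.sub_eq_one_or_of_adj_getVert {a : V} {w : G.Walk a a}
    (hc : w.IsCycle) (hw : w.length ≤ G.girth) {i j : ℕ} (hij : i < j) (hj : j < w.length)
    (hadj : G.Adj (w.getVert i) (w.getVert j)) : j - i = 1 ∨ j - i = w.length - 1 := by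
  by_contra! hne
  let p : G.Walk (w.getVert i) (w.getVert j) :=
    ((w.take j).drop i).copy (by simp [hij.le]) rfl
  have hp : p.IsPath := by simpa [p] using (hc.isPath_take hj).drop i
  have hlen : p.length = j - i := by
    simp only [p, Walk.length_copy, Walk.drop_length, Walk.take_length]
    omega
  have hedge : s(w.getVert j, w.getVert i) ∉ p.edges := fun h =>
    hne.1 (hlen ▸ hp.length_eq_one_of_mem_edges (Sym2.eq_swap ▸ h))
  have hcyc : (Walk.cons hadj.symm p).IsCycle :=
    (Walk.cons_isCycle_iff p hadj.symm).mpr ⟨hp, hedge⟩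
  have := hw.trans (G.girth_le_length hcyc)
  rw [Walk.length_cons, hlen] at this
  omega

theorem le_magPlus_of_alternating [Fintype V] (v : ℕ → V) {m : ℕ} (hm : Even m)
    (hinj : Set.InjOn v (Set.Iio m))
    (hpar : ∀ a < m, ∀ b < m, G.Adj (v a) (v b) → a % 2 ≠ b % 2)
    (hsucc : ∀ k, k + 1 < m → G.Adj (v k) (v (k + 1))) : m ≤ magPlus G := by
  classical
  let S := ((range m).filter Even).image v
  let T := ((range m).filter (¬ Even ·)).image v
  have hindep (P : ℕ → Prop) [DecidablePred P] (hP : ∀ a b, P a → P b → a % 2 = b % 2) :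
      G.IsIndepSet (((range m).filter P).image v : Set V) := by
    simp only [coe_image, coe_filter, mem_range]
    rintro _ ⟨a, ⟨ha, hPa⟩, rfl⟩ _ ⟨b, ⟨hb, hPb⟩, rfl⟩ - hadj
    exact hpar a ha b hb hadj (hP a b hPa hPb)
  have hcard : #S + #T = m := by
    rw [card_image_of_injOn, card_image_of_injOn, card_filter_add_card_filter_not, card_range]
    all_goals exact hinj.mono fun k hk => mem_range.mp (mem_filter.mp hk).1
  refine hcard ▸ card_add_card_le_magPlus
    (hindep _ fun a b ha hb => by grind) (hindep _ fun a b ha hb => by grind) ?_ ?_ ?_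
  · simp only [S, T, Finset.disjoint_left, mem_image, mem_filter, mem_range]
    rintro _ ⟨a, ⟨ha, hae⟩, rfl⟩ ⟨b, ⟨hb, hbo⟩, hab⟩
    exact hbo (hinj hb ha hab ▸ hae)
  · simp only [S, T, mem_image, mem_filter, mem_range]
    rintro _ ⟨a, ⟨ha, hae⟩, rfl⟩
    have : a + 1 < m := by grind
    exact ⟨v (a + 1), ⟨a + 1, ⟨this, by grind⟩, rfl⟩, hsucc a this⟩
  · simp only [S, T, mem_image, mem_filter, mem_range]
    rintro _ ⟨b, ⟨hb, hbo⟩, rfl⟩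
    obtain ⟨a, rfl⟩ : ∃ a, b = a + 1 := Nat.exists_eq_add_one.mpr (by grind)
    exact ⟨v a, ⟨a, ⟨by omega, by grind⟩, rfl⟩, hsucc a hb⟩

theorem _root_.SimpleGraph.Walk.IsCycle.length_sub_mod_two_le_magPlus [Fintype V] {a : V}
    {w : G.Walk a a} (hc : w.IsCycle) (hw : w.length ≤ G.girth) :
    w.length - w.length % 2 ≤ magPlus G := by
  refine le_magPlus_of_alternating (fun k => w.getVert (k + w.length % 2))
    (by grind) (fun i hi j hj hij => ?_) (fun i hi j hj hadj => ?_) (fun k hk => ?_)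
  · have := hc.getVert_injOn' (by simp only [Set.mem_Iio, Set.mem_ofPred_eq] at hi ⊢; omega)
      (by simp only [Set.mem_Iio, Set.mem_ofPred_eq] at hj ⊢; omega) hij
    omega
  · rcases lt_trichotomy i j with h | rfl | h
    · have := hc.sub_eq_one_or_of_adj_getVert hw (by omega) (by omega) hadj
      omega
    · exact (hadj.ne rfl).elim
    · have := hc.sub_eq_one_or_of_adj_getVert hw (by omega) (by omega) hadj.symm
      omega
  · simpa [Nat.add_right_comm] using w.adj_getVert_succ (i := k + w.length % 2) (by omega)

end Cycle

/-- if `G` has girth `g ≥ 3`, then `mag⁺(G) ≥ g - 1` when `g` is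
odd and `mag⁺(G) ≥ g` when `g` is even. -/
theorem magPlus_ge_of_girth {V : Type*} [Fintype V] (G : SimpleGraph V)
    (g : ℕ) (hg3 : 3 ≤ g) (hg : G.girth = g) :
    (Odd g → g - 1 ≤ magPlus G) ∧ (Even g → g ≤ magPlus G) := by
  have hG : ¬ G.IsAcyclic := fun h => by
    rw [h.girth_eq_zero] at hg
    omega
  obtain ⟨a, w, hc, hw⟩ := exists_girth_eq_length.mpr hG
  have key := hc.length_sub_mod_two_le_magPlus hw.ge
  rw [← hw, hg] at key
  exact ⟨fun hodd => by rwa [Nat.odd_iff.mp hodd] at key,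
    fun heven => by rwa [Nat.even_iff.mp heven, Nat.sub_zero] at key⟩

end MAG
end
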